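/- Bob's explicit cheating strategy—applying |0⟩|0⟩ ↦ |0⟩(|0⟩+|1⟩)/√2 and |x+1⟩|0⟩ ↦ |x+1⟩|x⟩ for x ∈ {0,1}, then measuring the ancilla to obtain b—wins the weak coin flipping game with probability exactly ((1/√2)cos²(α/2) + sin²(α/2))². -/

import Mathlib

/-! Measuring ancilla outcome `a` leaves Bob the branch `Φ a (·, a)`, which is `ψ_a` with its
`|·⟩|0⟩` components damped by `1/√2` and its `|·⟩|a+1⟩` components untouched. Its overlap with
`ψ_a` is therefore the weighted squared norm
`(1/√2)‖ψ_a on |0⟩‖² + ‖ψ_a on |a+1⟩‖² = cos²(α/2)/√2 + sin²(α/2)`, independent of `a`,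
and the winning probability is its square. -/

open Matrix

/-- `|ψ_{a,s}⟩ = cos(α/2)|0⟩ + (−1)^s sin(α/2)|a+1⟩` in `ℂ³`. -/
noncomputable def psit (α : ℝ) (a s : Fin 2) : Fin 3 → ℂ :=
  (Real.cos (α / 2) : ℂ) • (Pi.single 0 1 : Fin 3 → ℂ) +
    ((-1 : ℂ) ^ (s : ℕ) * (Real.sin (α / 2) : ℂ)) • (Pi.single a.succ 1 : Fin 3 → ℂ)

/-- `|ψ_a⟩ = (1/√2)(|0⟩|ψ_{a,0}⟩ + |1⟩|ψ_{a,1}⟩)` in `ℂ² ⊗ ℂ³`. -/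
noncomputable def psi (α : ℝ) (a : Fin 2) : Fin 2 × Fin 3 → ℂ :=
  fun p => (Real.sqrt 2 : ℂ)⁻¹ * psit α a p.1 p.2

section

variable (α : ℝ) (a s : Fin 2)

theorem psit_apply_zero : psit α a s 0 = Real.cos (α / 2) := by
  simp [psit, Fin.succ_ne_zero]

theorem psit_apply_succ_self : psit α a s a.succ = (-1 : ℂ) ^ (s : ℕ) * Real.sin (α / 2) := by
  simp [psit]

theorem norm_psit_apply_zero : ‖psit α a s 0‖ = |Real.cos (α / 2)| := by
  rw [psit_apply_zero, Complex.norm_real, Real.norm_eq_abs]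

theorem norm_psit_apply_succ_self : ‖psit α a s a.succ‖ = |Real.sin (α / 2)| := by
  rw [psit_apply_succ_self, norm_mul, norm_pow, norm_neg, norm_one, one_pow, one_mul,
    Complex.norm_real, Real.norm_eq_abs]

/-- The amplitude factor that Bob's isometry, followed by ancilla outcome `a`, puts on the qutrit
component `|j⟩`. -/
noncomputable def bobWeight (j : Fin 3) : ℝ :=
  if j = 0 then (Real.sqrt 2)⁻¹ else if j = a.succ then 1 else 0

theorem sum_bobWeight_mul_norm_psit_sq :
    ∑ j, bobWeight a j * ‖psit α a s j‖ ^ 2 =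
      (Real.sqrt 2)⁻¹ * Real.cos (α / 2) ^ 2 + Real.sin (α / 2) ^ 2 := by
  rw [Fintype.sum_eq_add 0 a.succ (Fin.succ_ne_zero a).symm]
  · simp [bobWeight, norm_psit_apply_zero, norm_psit_apply_succ_self, Fin.succ_ne_zero]
  · rintro j ⟨hj0, hja⟩
    simp [bobWeight, hj0, hja]

theorem sum_bobWeight_mul_norm_psi_sq :
    ∑ p, bobWeight a p.2 * ‖psi α a p‖ ^ 2 =
      (Real.sqrt 2)⁻¹ * Real.cos (α / 2) ^ 2 + Real.sin (α / 2) ^ 2 := by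
  have hnorm : ∀ p, ‖psi α a p‖ ^ 2 = 2⁻¹ * ‖psit α a p.1 p.2‖ ^ 2 := fun p => by
    simp [psi, mul_pow]
  simp only [hnorm, Fintype.sum_prod_type, mul_left_comm _ (2⁻¹ : ℝ), ← Finset.mul_sum,
    sum_bobWeight_mul_norm_psit_sq, Fin.sum_univ_two]
  ring

end

theorem sum_conj_mul_weighted_eq_sum_mul_norm_sq {ι : Type*} [Fintype ι] (ψ : ι → ℂ)
    (w : ι → ℝ) :
    ∑ p, starRingEnd ℂ (ψ p) * (w p * ψ p) = ((∑ p, w p * ‖ψ p‖ ^ 2 : ℝ) : ℂ) := by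
  push_cast
  exact Finset.sum_congr rfl fun p _ => by rw [mul_left_comm, Complex.conj_mul']

/-- `Φ a` is the joint state on `ℂ² ⊗ ℂ³ ⊗ ℂ²` after Bob's unitary when Alice picked `a`; the
winning ancilla outcome is `e = a`, upon which Bob sends `b = 1 − a`. -/
theorem bob_explicit_strategy (α : ℝ)
    (Φ : Fin 2 → (Fin 2 × Fin 3) × Fin 2 → ℂ)
    (hΦ : ∀ (a t : Fin 2) (j : Fin 3) (e : Fin 2),
      Φ a ((t, j), e) =
        if j = 0 then (Real.sqrt 2 : ℂ)⁻¹ * psi α a (t, 0)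
        else if j = e.succ then psi α a (t, j) else 0) :
    (1 / 2) * ∑ a : Fin 2,
        ‖∑ p : Fin 2 × Fin 3, (starRingEnd ℂ) (psi α a p) * Φ a (p, a)‖ ^ 2 =
      ((Real.sqrt 2)⁻¹ * Real.cos (α / 2) ^ 2 + Real.sin (α / 2) ^ 2) ^ 2 := by
  have hbranch : ∀ a p, Φ a (p, a) = bobWeight a p.2 * psi α a p := by
    rintro a ⟨t, j⟩
    rw [hΦ]
    unfold bobWeight
    split_ifs with h0 <;> simp [h0]
  have hoverlap : ∀ a, ∑ p, starRingEnd ℂ (psi α a p) * Φ a (p, a) =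
      (((Real.sqrt 2)⁻¹ * Real.cos (α / 2) ^ 2 + Real.sin (α / 2) ^ 2 : ℝ) : ℂ) := fun a => by
    simp only [hbranch, sum_conj_mul_weighted_eq_sum_mul_norm_sq, sum_bobWeight_mul_norm_psi_sq]
  simp only [hoverlap, Complex.norm_real, Real.norm_eq_abs, Fin.sum_univ_two]
  rw [abs_of_nonneg (by positivity)]
  ring
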